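/- arXiv:2006.06912 — 4 statements merged into one kernel-verified Lean document; each statement's English description precedes it below -/
import Mathlib

section
/- If x and y are two initial inventory vectors with x_i ≥ y_i for every 1 ≤ i ≤ m−1, then for every real z, P(D^m(x) ≤ z) ≤ P(D^m(y) ≤ z); that is, D^m(x) first-order stochastically dominates D^m(y). -/
/-! The domination holds pathwise: the effective demand is monotone in the initial inventory,
since more stock can only raise the partial sums `s i` and hence every later `max (e i) (s i)`.
So for each outcome of the demands `D^m(y) ≤ D^m(x)`, and the event `D^m(x) ≤ z` is contained
in the event `D^m(y) ≤ z`. -/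

open MeasureTheory ProbabilityTheory

/-- The effective-demand recursion: `e 1 = d 1` and
`e (i+1) = max (e i) (s i) + d (i+1)`, where `s i = x 1 + ⋯ + x i`. -/
noncomputable def effDemand (d x : ℕ → ℝ) : ℕ → ℝ
  | 0 => 0
  | 1 => d 1
  | (n + 2) => max (effDemand d x (n + 1)) (∑ j ∈ Finset.Icc 1 (n + 1), x j) + d (n + 2)

theorem effDemand_mono_inventory (d : ℕ → ℝ) {x y : ℕ → ℝ} :
    ∀ {n : ℕ}, (∀ i, 1 ≤ i → i < n → y i ≤ x i) → effDemand d y n ≤ effDemand d x n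
  | 0, _ => le_rfl
  | 1, _ => le_rfl
  | n + 2, hxy => by
    have hsum : ∑ j ∈ Finset.Icc 1 (n + 1), y j ≤ ∑ j ∈ Finset.Icc 1 (n + 1), x j :=
      Finset.sum_le_sum fun j hj => by
        obtain ⟨hj₁, hj₂⟩ := Finset.mem_Icc.mp hj
        exact hxy j hj₁ (by omega)
    have hprev : effDemand d y (n + 1) ≤ effDemand d x (n + 1) :=
      effDemand_mono_inventory d fun i hi hin => hxy i hi (by omega)
    simp only [effDemand]
    gcongr

theorem stmt_7_general {Ω : Type*} [MeasurableSpace Ω] (μ : Measure Ω)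
    (m : ℕ)
    (D : ℕ → Ω → ℝ)
    (x y : ℕ → ℝ)
    (hxy : ∀ i, 1 ≤ i → i ≤ m - 1 → y i ≤ x i) :
    ∀ z : ℝ, μ {ω | effDemand (fun j => D j ω) x m ≤ z}
      ≤ μ {ω | effDemand (fun j => D j ω) y m ≤ z} := by
  intro z
  refine measure_mono fun ω (hω : effDemand _ x m ≤ z) => ?_
  exact (effDemand_mono_inventory _ fun i hi him => hxy i hi (by omega)).trans hω

/-- If x_i ≥ y_i for every 1 ≤ i ≤ m−1, then for every real z,
P(D^m(x) ≤ z) ≤ P(D^m(y) ≤ z); i.e., D^m(x) first-order stochastically dominates D^m(y). -/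
theorem stmt_7 {Ω : Type*} [MeasurableSpace Ω] (μ : Measure Ω) [IsProbabilityMeasure μ]
    (m : ℕ) (hm : 1 ≤ m)
    (D : ℕ → Ω → ℝ) (hDmeas : ∀ i, Measurable (D i))
    (hindep : iIndepFun D μ)
    (hident : ∀ i, μ.map (D i) = μ.map (D 1))
    (hDnonneg : ∀ i, ∀ᵐ ω ∂μ, 0 ≤ D i ω)
    (x y : ℕ → ℝ) (hx : ∀ i, 0 ≤ x i) (hy : ∀ i, 0 ≤ y i)
    (hxy : ∀ i, 1 ≤ i → i ≤ m - 1 → y i ≤ x i) :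
    ∀ z : ℝ, μ {ω | effDemand (fun j => D j ω) x m ≤ z}
      ≤ μ {ω | effDemand (fun j => D j ω) y m ≤ z} :=
  stmt_7_general μ m D x y hxy
end

section
/- Let F_D : ℝ → ℝ be nondecreasing and continuous with F_D(z) = 0 for all z ≤ 0, strictly increasing on [0, ∞), and F_D(q) → 1 as q → ∞. Let F_m : ℝ → ℝ be nondecreasing and continuous with F_m(q) ≤ F_D(q) for all q and F_m(q) → 1 as q → ∞. Assume h ≥ 0, r − c > 0, θ + c > 0, and −1 < w ≤ 0. Then there exists a unique q ≥ 0 satisfying the optimality condition (θ + c) F_m(q) = (h + r − c)(1 − F_D(q)) − h − (θ + c) w, and this q is strictly positive. -/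
/-- With F_D nondecreasing, continuous, vanishing on (−∞, 0], strictly
increasing on [0, ∞), tending to 1 at ∞; F_m nondecreasing, continuous, F_m ≤ F_D,
tending to 1 at ∞; h ≥ 0, r − c > 0, θ + c > 0, −1 < w ≤ 0: there exists a unique q ≥ 0
satisfying (θ + c) F_m(q) = (h + r − c)(1 − F_D(q)) − h − (θ + c) w, and it is strictly
positive. -/
theorem stmt_14 (h r c θ w : ℝ) (hh : 0 ≤ h) (hrc : 0 < r - c) (hθc : 0 < θ + c)
    (hw1 : -1 < w) (hw2 : w ≤ 0)
    (FD Fm : ℝ → ℝ)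
    (hFD_mono : Monotone FD) (hFD_cont : Continuous FD)
    (hFD_zero : ∀ z : ℝ, z ≤ 0 → FD z = 0)
    (hFD_strict : StrictMonoOn FD (Set.Ici 0))
    (hFD_lim : Filter.Tendsto FD Filter.atTop (nhds 1))
    (hFm_mono : Monotone Fm) (hFm_cont : Continuous Fm)
    (hFm_le : ∀ q, Fm q ≤ FD q)
    (hFm_lim : Filter.Tendsto Fm Filter.atTop (nhds 1)) :
    ∃ q : ℝ, 0 < q ∧
      (θ + c) * Fm q = (h + r - c) * (1 - FD q) - h - (θ + c) * w ∧
      ∀ q' : ℝ, 0 ≤ q' →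
        (θ + c) * Fm q' = (h + r - c) * (1 - FD q') - h - (θ + c) * w → q' = q := by
  set g : ℝ → ℝ := fun q => (θ + c) * Fm q + (h + r - c) * FD q with hg
  set K : ℝ := (r - c) - (θ + c) * w with hK
  have hhrc : 0 < h + r - c := by linarith
  have hKpos : 0 < K := by nlinarith
  have hequiv : ∀ q : ℝ,
      ((θ + c) * Fm q = (h + r - c) * (1 - FD q) - h - (θ + c) * w) ↔ g q = K := by
    intro q
    constructor <;> intro hq <;> simp only [hg, hK] at * <;> nlinarith
  -- g tends to (θ+c) + (h+r-c) at top
  have hglim : Filter.Tendsto g Filter.atTop (nhds ((θ + c) * 1 + (h + r - c) * 1)) :=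
    ((hFm_lim.const_mul (θ + c)).add (hFD_lim.const_mul (h + r - c)))
  have hKlt : K < (θ + c) * 1 + (h + r - c) * 1 := by nlinarith
  have hev : ∀ᶠ x in Filter.atTop, K < g x :=
    hglim.eventually (eventually_gt_nhds hKlt)
  obtain ⟨M, hM⟩ := (hev.and (Filter.eventually_ge_atTop (0 : ℝ))).exists
  obtain ⟨hMK, hM0⟩ := hM
  -- g 0 ≤ 0 < K
  have hg0 : g 0 ≤ 0 := by
    have h1 : FD 0 = 0 := hFD_zero 0 le_rfl
    have h2 : Fm 0 ≤ 0 := by have := hFm_le 0; linarith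
    simp only [hg, h1]
    nlinarith
  have hgcont : Continuous g := (((continuous_const.mul hFm_cont)).add ((continuous_const.mul hFD_cont)))
  have hKmem : K ∈ Set.Icc (g 0) (g M) := ⟨by linarith, le_of_lt hMK⟩
  obtain ⟨q, hqmem, hqK⟩ := intermediate_value_Icc hM0 hgcont.continuousOn hKmem
  have hq0 : 0 ≤ q := hqmem.1
  have hqpos : 0 < q := by
    rcases lt_or_eq_of_le hq0 with h' | h'
    · exact h'
    · exfalso; rw [← h'] at hqK; linarith
  have hg_strict : StrictMonoOn g (Set.Ici 0) := by
    intro a ha b hb hab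
    have h1 : Fm a ≤ Fm b := hFm_mono hab.le
    have h2 : FD a < FD b := hFD_strict ha hb hab
    simp only [hg]
    nlinarith
  refine ⟨q, hqpos, (hequiv q).mpr hqK, fun q' hq' heq' => ?_⟩
  exact hg_strict.injOn hq' hq0 (((hequiv q').mp heq').trans hqK.symm)
end

section
/- Let F_D : ℝ → ℝ be nondecreasing and continuous with F_D(z) = 0 for all z ≤ 0, strictly increasing on [0, ∞), and F_D(q) → 1 as q → ∞. Let F₁, F₂ : ℝ → ℝ be nondecreasing and continuous with F_i(q) ≤ F_D(q) for all q, F_i(q) → 1 as q → ∞ (i = 1, 2), and F₁(q) ≤ F₂(q) for all q. Assume h ≥ 0, r − c > 0, θ + c > 0, and −1 < w ≤ 0, and let q₁ and q₂ be the unique nonnegative solutions of (θ + c) F_i(q) = (h + r − c)(1 − F_D(q)) − h − (θ + c) w for i = 1 and i = 2, respectively. Then q₁ ≥ q₂ and F₁(q₁) ≤ F₂(q₂). -/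
/-- Under the hypotheses of the existence-uniqueness result, if F₁ ≤ F₂
pointwise and q₁, q₂ are the unique nonnegative solutions of the optimality condition
(θ + c) F_i(q) = (h + r − c)(1 − F_D(q)) − h − (θ + c) w for i = 1, 2 respectively, then
q₁ ≥ q₂ and F₁(q₁) ≤ F₂(q₂). -/
theorem stmt_15 (h r c θ w : ℝ) (hh : 0 ≤ h) (hrc : 0 < r - c) (hθc : 0 < θ + c)
    (hw1 : -1 < w) (hw2 : w ≤ 0)
    (FD F₁ F₂ : ℝ → ℝ)
    (hFD_mono : Monotone FD) (hFD_cont : Continuous FD)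
    (hFD_zero : ∀ z : ℝ, z ≤ 0 → FD z = 0)
    (hFD_strict : StrictMonoOn FD (Set.Ici 0))
    (hFD_lim : Filter.Tendsto FD Filter.atTop (nhds 1))
    (hF₁_mono : Monotone F₁) (hF₁_cont : Continuous F₁)
    (hF₁_le : ∀ q, F₁ q ≤ FD q)
    (hF₁_lim : Filter.Tendsto F₁ Filter.atTop (nhds 1))
    (hF₂_mono : Monotone F₂) (hF₂_cont : Continuous F₂)
    (hF₂_le : ∀ q, F₂ q ≤ FD q)
    (hF₂_lim : Filter.Tendsto F₂ Filter.atTop (nhds 1))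
    (hF₁₂ : ∀ q, F₁ q ≤ F₂ q)
    (q₁ q₂ : ℝ) (hq₁ : 0 ≤ q₁) (hq₂ : 0 ≤ q₂)
    (heq₁ : (θ + c) * F₁ q₁ = (h + r - c) * (1 - FD q₁) - h - (θ + c) * w)
    (heq₂ : (θ + c) * F₂ q₂ = (h + r - c) * (1 - FD q₂) - h - (θ + c) * w) :
    q₂ ≤ q₁ ∧ F₁ q₁ ≤ F₂ q₂ := by
  have hb : 0 < h + r - c := by linarith
  have hle : q₂ ≤ q₁ := by
    by_contra hlt
    push_neg at hlt
    have hFD : FD q₁ < FD q₂ := hFD_strict hq₁ hq₂ hlt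
    have h1 : F₁ q₁ ≤ F₂ q₂ := le_trans (hF₁_mono hlt.le) (hF₁₂ q₂)
    nlinarith [mul_le_mul_of_nonneg_left h1 hθc.le,
      mul_lt_mul_of_pos_left hFD hb]
  have hFD : FD q₂ ≤ FD q₁ := hFD_mono hle
  refine ⟨hle, ?_⟩
  have : (θ + c) * F₁ q₁ ≤ (θ + c) * F₂ q₂ := by nlinarith
  exact le_of_mul_le_mul_left this hθc
end

section
/- Let M > 0 and let F_D : ℝ → ℝ be continuous and strictly increasing on [0, M]. Assume h ≥ 0, r − c > 0, θ + c > 0, and let w be a real number. For each n, let F_{1,n}, F_{2,n} : ℝ → ℝ be functions and let q_n, q′_n ∈ [0, M] satisfy the optimality equations (θ + c) F_{1,n}(q_n) = (h + r − c)(1 − F_D(q_n)) − h − (θ + c) w and (θ + c) F_{2,n}(q′_n) = (h + r − c)(1 − F_D(q′_n)) − h − (θ + c) w. Then q_n − q′_n → 0 as n → ∞ if and only if F_{1,n}(q_n) − F_{2,n}(q′_n) → 0 as n → ∞. -/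
/-!
Subtracting the two optimality equations gives
`F₁ₙ(qₙ) - F₂ₙ(q′ₙ) = -((h + r - c) / (θ + c)) (F_D(qₙ) - F_D(q′ₙ))` with a nonzero factor, so it
suffices that `qₙ - q′ₙ → 0 ↔ F_D(qₙ) - F_D(q′ₙ) → 0`. This holds because a continuous injective
map on a compact set is uniformly continuous there and so is its inverse on the (compact) image.
-/

open Filter Set Topology Uniformity

theorem Set.LeftInvOn.continuousOn_image {X Y : Type*} [TopologicalSpace X] [TopologicalSpace Y]
    [T2Space Y] {f : X → Y} {g : Y → X} {K : Set X} (hg : LeftInvOn g f K) (hK : IsCompact K)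
    (hf : ContinuousOn f K) : ContinuousOn g (f '' K) := by
  refine continuousOn_iff_isClosed.2 fun C hC => ⟨f '' (C ∩ K), ?_, ?_⟩
  · exact ((hK.inter_left hC).image_of_continuousOn (hf.mono inter_subset_right)).isClosed
  · rw [← hg.image_inter', inter_eq_left.2 (image_mono inter_subset_right)]

theorem UniformContinuousOn.tendsto_uniformity_comp {α β ι : Type*} [UniformSpace α]
    [UniformSpace β] {f : α → β} {s : Set α} (hf : UniformContinuousOn f s) {l : Filter ι}
    {x y : ι → α} (hx : ∀ i, x i ∈ s) (hy : ∀ i, y i ∈ s)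
    (hxy : Tendsto (fun i => (x i, y i)) l (𝓤 α)) :
    Tendsto (fun i => (f (x i), f (y i))) l (𝓤 β) :=
  Tendsto.comp hf <|
    tendsto_inf.2 ⟨hxy, tendsto_principal.2 (.of_forall fun i => mk_mem_prod (hx i) (hy i))⟩

theorem IsCompact.tendsto_uniformity_comp_iff {α β ι : Type*} [UniformSpace α] [UniformSpace β]
    [T2Space β] {K : Set α} (hK : IsCompact K) {f : α → β} (hf : ContinuousOn f K)
    (hinj : InjOn f K) {l : Filter ι} {x y : ι → α} (hx : ∀ i, x i ∈ K) (hy : ∀ i, y i ∈ K) :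
    Tendsto (fun i => (f (x i), f (y i))) l (𝓤 β) ↔ Tendsto (fun i => (x i, y i)) l (𝓤 α) := by
  refine ⟨fun hfxy => ?_, (hK.uniformContinuousOn_of_continuous hf).tendsto_uniformity_comp hx hy⟩
  -- `invFunOn` needs a point of `α`, which the sequences supply unless `ι` is empty.
  cases isEmpty_or_nonempty ι
  · exact tendsto_of_isEmpty
  have : Nonempty α := ⟨x (Classical.arbitrary ι)⟩
  have hg := hinj.leftInvOn_invFunOn
  have hunif := (hK.image_of_continuousOn hf).uniformContinuousOn_of_continuous
    (hg.continuousOn_image hK hf)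
  simpa only [hg (hx _), hg (hy _)] using
    hunif.tendsto_uniformity_comp (fun i => mem_image_of_mem f (hx i))
      (fun i => mem_image_of_mem f (hy i)) hfxy

theorem tendsto_sub_nhds_zero_iff_tendsto_uniformity {G ι : Type*} [UniformSpace G] [AddGroup G]
    [IsUniformAddGroup G] {l : Filter ι} {x y : ι → G} :
    Tendsto (fun i => x i - y i) l (𝓝 0) ↔ Tendsto (fun i => (x i, y i)) l (𝓤 G) := by
  rw [uniformity_eq_comap_nhds_zero_swapped, tendsto_comap_iff]
  rfl

theorem stmt_17_general (M : ℝ)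
    (FD : ℝ → ℝ)
    (hFD_cont : ContinuousOn FD (Set.Icc 0 M))
    (hFD_strict : StrictMonoOn FD (Set.Icc 0 M))
    (h r c θ w : ℝ) (hh : 0 ≤ h) (hrc : 0 < r - c) (hθc : 0 < θ + c)
    (F1 F2 : ℕ → ℝ → ℝ) (q q' : ℕ → ℝ)
    (hq : ∀ n, q n ∈ Set.Icc 0 M) (hq' : ∀ n, q' n ∈ Set.Icc 0 M)
    (heq1 : ∀ n, (θ + c) * F1 n (q n) = (h + r - c) * (1 - FD (q n)) - h - (θ + c) * w)
    (heq2 : ∀ n, (θ + c) * F2 n (q' n) = (h + r - c) * (1 - FD (q' n)) - h - (θ + c) * w) :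
    Filter.Tendsto (fun n => q n - q' n) Filter.atTop (nhds 0) ↔
    Filter.Tendsto (fun n => F1 n (q n) - F2 n (q' n)) Filter.atTop (nhds 0) := by
  have hk : -(h + r - c) / (θ + c) ≠ 0 := div_ne_zero (by linarith) hθc.ne'
  have hF : (fun n => F1 n (q n) - F2 n (q' n)) =
      fun n => (-(h + r - c) / (θ + c)) • (FD (q n) - FD (q' n)) := by
    ext n
    rw [smul_eq_mul, div_mul_eq_mul_div, eq_div_iff hθc.ne']
    linear_combination heq1 n - heq2 n
  have hscale := tendsto_const_smul_iff₀ hk (l := atTop)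
    (f := fun n => FD (q n) - FD (q' n)) (a := 0)
  rw [smul_zero] at hscale
  rw [hF, hscale, tendsto_sub_nhds_zero_iff_tendsto_uniformity,
    tendsto_sub_nhds_zero_iff_tendsto_uniformity,
    isCompact_Icc.tendsto_uniformity_comp_iff hFD_cont hFD_strict.injOn hq hq']

/-- Let M > 0 and F_D be continuous and strictly increasing on [0, M]. If
q_n, q′_n ∈ [0, M] satisfy the optimality equations
(θ + c) F_{1,n}(q_n) = (h + r − c)(1 − F_D(q_n)) − h − (θ + c) w and
(θ + c) F_{2,n}(q′_n) = (h + r − c)(1 − F_D(q′_n)) − h − (θ + c) w, then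
q_n − q′_n → 0 if and only if F_{1,n}(q_n) − F_{2,n}(q′_n) → 0. -/
theorem stmt_17 (M : ℝ) (hM : 0 < M)
    (FD : ℝ → ℝ)
    (hFD_cont : ContinuousOn FD (Set.Icc 0 M))
    (hFD_strict : StrictMonoOn FD (Set.Icc 0 M))
    (h r c θ w : ℝ) (hh : 0 ≤ h) (hrc : 0 < r - c) (hθc : 0 < θ + c)
    (F1 F2 : ℕ → ℝ → ℝ) (q q' : ℕ → ℝ)
    (hq : ∀ n, q n ∈ Set.Icc 0 M) (hq' : ∀ n, q' n ∈ Set.Icc 0 M)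
    (heq1 : ∀ n, (θ + c) * F1 n (q n) = (h + r - c) * (1 - FD (q n)) - h - (θ + c) * w)
    (heq2 : ∀ n, (θ + c) * F2 n (q' n) = (h + r - c) * (1 - FD (q' n)) - h - (θ + c) * w) :
    Filter.Tendsto (fun n => q n - q' n) Filter.atTop (nhds 0) ↔
    Filter.Tendsto (fun n => F1 n (q n) - F2 n (q' n)) Filter.atTop (nhds 0) :=
  stmt_17_general M FD hFD_cont hFD_strict h r c θ w hh hrc hθc F1 F2 q q' hq hq' heq1 heq2
end
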